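/- For every positive integer n, 16·T(1,3,9;n) = N(1,3,9;4(8n+13)) − N(1,3,9;8n+13). -/
import Mathlib

/-- Number of representations of `n` as `a*x^2 + b*y^2 + c*z^2` with `x,y,z : ℤ`. -/
noncomputable def N (a b c n : ℕ) : ℕ :=
  Nat.card {p : ℤ × ℤ × ℤ //
    (a : ℤ) * p.1 ^ 2 + (b : ℤ) * p.2.1 ^ 2 + (c : ℤ) * p.2.2 ^ 2 = (n : ℤ)}

/-- Number of representations of `n` as `a*x(x+1)/2 + b*y(y+1)/2 + c*z(z+1)/2` with `x,y,z : ℕ`. -/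
noncomputable def T (a b c n : ℕ) : ℕ :=
  Nat.card {p : ℕ × ℕ × ℕ //
    a * (p.1 * (p.1 + 1) / 2) + b * (p.2.1 * (p.2.1 + 1) / 2)
      + c * (p.2.2 * (p.2.2 + 1) / 2) = n}

namespace Stmt5Aux

abbrev P3 := ℤ × ℤ × ℤ

def Q : P3 → ℤ
  | (x,y,z) => x^2 + 3*y^2 + 9*z^2

lemma sq4 (q r : ℤ) : (4*q+r)^2 % 8 = r^2 % 8 := by
  have h : (4*q+r)^2 = r^2 + 8*(2*q^2+q*r) := by ring
  rw [h, Int.add_mul_emod_self_left]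

lemma sqm8 (x : ℤ) : x^2 % 8 = (x%4)^2 % 8 := by
  have h := sq4 (x/4) (x%4)
  rwa [Int.mul_ediv_add_emod x 4] at h

lemma classify4 (x y z M : ℤ) (hM : M % 8 = 4) (h : x^2 + 3*y^2 + 9*z^2 = M) :
    (2 ∣ x ∧ 2 ∣ y ∧ 2 ∣ z) ∨ (¬2 ∣ x ∧ ¬2 ∣ y ∧ 4 ∣ z) ∨ (4 ∣ x ∧ ¬2 ∣ y ∧ ¬2 ∣ z) := by
  have e1 := sqm8 x; have e2 := sqm8 y; have e3 := sqm8 z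
  obtain ⟨X, hX⟩ : ∃ X, x^2 = X := ⟨_, rfl⟩
  obtain ⟨Y, hY⟩ : ∃ Y, y^2 = Y := ⟨_, rfl⟩
  obtain ⟨Z, hZ⟩ : ∃ Z, z^2 = Z := ⟨_, rfl⟩
  rw [hX] at e1 h; rw [hY] at e2 h; rw [hZ] at e3 h
  obtain ⟨a, ha⟩ : ∃ a, x % 4 = a := ⟨_, rfl⟩
  obtain ⟨b, hb⟩ : ∃ b, y % 4 = b := ⟨_, rfl⟩
  obtain ⟨c, hc⟩ : ∃ c, z % 4 = c := ⟨_, rfl⟩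
  rw [ha] at e1; rw [hb] at e2; rw [hc] at e3
  have ha0 : 0 ≤ a := ha ▸ Int.emod_nonneg x (by norm_num)
  have ha4 : a < 4 := ha ▸ Int.emod_lt_of_pos x (by norm_num)
  have hb0 : 0 ≤ b := hb ▸ Int.emod_nonneg y (by norm_num)
  have hb4 : b < 4 := hb ▸ Int.emod_lt_of_pos y (by norm_num)
  have hc0 : 0 ≤ c := hc ▸ Int.emod_nonneg z (by norm_num)
  have hc4 : c < 4 := hc ▸ Int.emod_lt_of_pos z (by norm_num)
  interval_cases a <;> interval_cases b <;> interval_cases c <;>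
    norm_num at e1 e2 e3 <;> omega

lemma L1 (x k w n : ℤ) (hx : ¬ (2:ℤ) ∣ x)
    (h : (x+3*k)^2 + 3*k^2 + 36*w^2 = 8*n+13) : (2:ℤ) ∣ k := by
  have e1 := sqm8 (x+3*k); have e2 := sqm8 k; have e3 := sqm8 w
  obtain ⟨X, hX⟩ : ∃ X, (x+3*k)^2 = X := ⟨_, rfl⟩
  obtain ⟨Y, hY⟩ : ∃ Y, k^2 = Y := ⟨_, rfl⟩
  obtain ⟨Z, hZ⟩ : ∃ Z, w^2 = Z := ⟨_, rfl⟩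
  rw [hX] at e1 h; rw [hY] at e2 h; rw [hZ] at e3 h
  obtain ⟨a, ha⟩ : ∃ a, (x+3*k) % 4 = a := ⟨_, rfl⟩
  obtain ⟨b, hb⟩ : ∃ b, k % 4 = b := ⟨_, rfl⟩
  obtain ⟨c, hc⟩ : ∃ c, w % 4 = c := ⟨_, rfl⟩
  rw [ha] at e1; rw [hb] at e2; rw [hc] at e3
  have ha0 : 0 ≤ a := ha ▸ Int.emod_nonneg _ (by norm_num)
  have ha4 : a < 4 := ha ▸ Int.emod_lt_of_pos _ (by norm_num)
  have hb0 : 0 ≤ b := hb ▸ Int.emod_nonneg _ (by norm_num)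
  have hb4 : b < 4 := hb ▸ Int.emod_lt_of_pos _ (by norm_num)
  have hc0 : 0 ≤ c := hc ▸ Int.emod_nonneg _ (by norm_num)
  have hc4 : c < 4 := hc ▸ Int.emod_lt_of_pos _ (by norm_num)
  interval_cases a <;> interval_cases b <;> interval_cases c <;>
    norm_num at e1 e2 e3 <;> omega

lemma L2 (x k w n : ℤ) (hx : ¬ (2:ℤ) ∣ x)
    (h : (x+6*k)^2 + 12*k^2 + 36*w^2 = 8*n+13) : ¬ (2:ℤ) ∣ (k+w) := by
  have e1 := sqm8 (x+6*k); have e2 := sqm8 k; have e3 := sqm8 w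
  obtain ⟨X, hX⟩ : ∃ X, (x+6*k)^2 = X := ⟨_, rfl⟩
  obtain ⟨Y, hY⟩ : ∃ Y, k^2 = Y := ⟨_, rfl⟩
  obtain ⟨Z, hZ⟩ : ∃ Z, w^2 = Z := ⟨_, rfl⟩
  rw [hX] at e1 h; rw [hY] at e2 h; rw [hZ] at e3 h
  obtain ⟨a, ha⟩ : ∃ a, (x+6*k) % 4 = a := ⟨_, rfl⟩
  obtain ⟨b, hb⟩ : ∃ b, k % 4 = b := ⟨_, rfl⟩
  obtain ⟨c, hc⟩ : ∃ c, w % 4 = c := ⟨_, rfl⟩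
  rw [ha] at e1; rw [hb] at e2; rw [hc] at e3
  have ha0 : 0 ≤ a := ha ▸ Int.emod_nonneg _ (by norm_num)
  have ha4 : a < 4 := ha ▸ Int.emod_lt_of_pos _ (by norm_num)
  have hb0 : 0 ≤ b := hb ▸ Int.emod_nonneg _ (by norm_num)
  have hb4 : b < 4 := hb ▸ Int.emod_lt_of_pos _ (by norm_num)
  have hc0 : 0 ≤ c := hc ▸ Int.emod_nonneg _ (by norm_num)
  have hc4 : c < 4 := hc ▸ Int.emod_lt_of_pos _ (by norm_num)
  interval_cases a <;> interval_cases b <;> interval_cases c <;>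
    norm_num at e1 e2 e3 <;> omega

lemma L3 (u e k n : ℤ) (hk : ¬ (2:ℤ) ∣ k)
    (h : 4*u^2 + 12*e^2 + 9*k^2 = 8*n+13) : ¬ (2:ℤ) ∣ (u+e) := by
  have e1 := sqm8 u; have e2 := sqm8 e; have e3 := sqm8 k
  obtain ⟨X, hX⟩ : ∃ X, u^2 = X := ⟨_, rfl⟩
  obtain ⟨Y, hY⟩ : ∃ Y, e^2 = Y := ⟨_, rfl⟩
  obtain ⟨Z, hZ⟩ : ∃ Z, k^2 = Z := ⟨_, rfl⟩
  rw [hX] at e1 h; rw [hY] at e2 h; rw [hZ] at e3 h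
  obtain ⟨a, ha⟩ : ∃ a, u % 4 = a := ⟨_, rfl⟩
  obtain ⟨b, hb⟩ : ∃ b, e % 4 = b := ⟨_, rfl⟩
  obtain ⟨c, hc⟩ : ∃ c, k % 4 = c := ⟨_, rfl⟩
  rw [ha] at e1; rw [hb] at e2; rw [hc] at e3
  have ha0 : 0 ≤ a := ha ▸ Int.emod_nonneg _ (by norm_num)
  have ha4 : a < 4 := ha ▸ Int.emod_lt_of_pos _ (by norm_num)
  have hb0 : 0 ≤ b := hb ▸ Int.emod_nonneg _ (by norm_num)
  have hb4 : b < 4 := hb ▸ Int.emod_lt_of_pos _ (by norm_num)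
  have hc0 : 0 ≤ c := hc ▸ Int.emod_nonneg _ (by norm_num)
  have hc4 : c < 4 := hc ▸ Int.emod_lt_of_pos _ (by norm_num)
  interval_cases a <;> interval_cases b <;> interval_cases c <;>
    norm_num at e1 e2 e3 <;> omega

lemma L4 (u v k n : ℤ)
    (h : 4*u^2 + 3*v^2 + 9*k^2 = 8*n+13) : ¬ (2:ℤ) ∣ k := by
  have e1 := sqm8 u; have e2 := sqm8 v; have e3 := sqm8 k
  obtain ⟨X, hX⟩ : ∃ X, u^2 = X := ⟨_, rfl⟩
  obtain ⟨Y, hY⟩ : ∃ Y, v^2 = Y := ⟨_, rfl⟩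
  obtain ⟨Z, hZ⟩ : ∃ Z, k^2 = Z := ⟨_, rfl⟩
  rw [hX] at e1 h; rw [hY] at e2 h; rw [hZ] at e3 h
  obtain ⟨a, ha⟩ : ∃ a, u % 4 = a := ⟨_, rfl⟩
  obtain ⟨b, hb⟩ : ∃ b, v % 4 = b := ⟨_, rfl⟩
  obtain ⟨c, hc⟩ : ∃ c, k % 4 = c := ⟨_, rfl⟩
  rw [ha] at e1; rw [hb] at e2; rw [hc] at e3
  have ha0 : 0 ≤ a := ha ▸ Int.emod_nonneg _ (by norm_num)
  have ha4 : a < 4 := ha ▸ Int.emod_lt_of_pos _ (by norm_num)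
  have hb0 : 0 ≤ b := hb ▸ Int.emod_nonneg _ (by norm_num)
  have hb4 : b < 4 := hb ▸ Int.emod_lt_of_pos _ (by norm_num)
  have hc0 : 0 ≤ c := hc ▸ Int.emod_nonneg _ (by norm_num)
  have hc4 : c < 4 := hc ▸ Int.emod_lt_of_pos _ (by norm_num)
  interval_cases a <;> interval_cases b <;> interval_cases c <;>
    norm_num at e1 e2 e3 <;> omega

lemma finite_Q (k : ℤ) : {p : P3 | Q p = k}.Finite := by
  apply Set.Finite.subset (Set.finite_Icc ((-k,-k,-k) : P3) ((k,k,k) : P3))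
  rintro ⟨x,y,z⟩ h
  simp only [Q, Set.mem_setOf_eq] at h
  have hx : x^2 ≤ k := by nlinarith [sq_nonneg y, sq_nonneg z]
  have hy : y^2 ≤ k := by nlinarith [sq_nonneg x, sq_nonneg z, sq_nonneg y]
  have hz : z^2 ≤ k := by nlinarith [sq_nonneg x, sq_nonneg y, sq_nonneg z]
  have hb : ∀ t : ℤ, t^2 ≤ k → -k ≤ t ∧ t ≤ k := by
    intro t ht
    constructor
    · nlinarith [sq_nonneg (t+1)]
    · nlinarith [sq_nonneg (t-1)]
  obtain ⟨h1,h2⟩ := hb x hx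
  obtain ⟨h3,h4⟩ := hb y hy
  obtain ⟨h5,h6⟩ := hb z hz
  simp [Set.mem_Icc, Prod.le_def]
  exact ⟨⟨h1,h3,h5⟩,h2,h4,h6⟩

def Mz (n : ℕ) : ℤ := 8*(n:ℤ)+13
def S1 (n : ℕ) : Set P3 := {p | Q p = Mz n}
def S4 (n : ℕ) : Set P3 := {p | Q p = 4 * Mz n}
def SE (n : ℕ) : Set P3 := {p | Q p = 4*Mz n ∧ 2∣p.1 ∧ 2∣p.2.1 ∧ 2∣p.2.2}
def SA (n : ℕ) : Set P3 := {p | Q p = 4*Mz n ∧ ¬2∣p.1 ∧ ¬2∣p.2.1 ∧ 4∣p.2.2}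
def SB (n : ℕ) : Set P3 := {p | Q p = 4*Mz n ∧ 4∣p.1 ∧ ¬2∣p.2.1 ∧ ¬2∣p.2.2}
def SO (n : ℕ) : Set P3 := {p | Q p = Mz n ∧ ¬2∣p.1 ∧ ¬2∣p.2.1 ∧ ¬2∣p.2.2}

lemma finSE (n : ℕ) : (SE n).Finite := (finite_Q (4*Mz n)).subset (fun _ hp => hp.1)
lemma finSA (n : ℕ) : (SA n).Finite := (finite_Q (4*Mz n)).subset (fun _ hp => hp.1)
lemma finSB (n : ℕ) : (SB n).Finite := (finite_Q (4*Mz n)).subset (fun _ hp => hp.1)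

def dbl (p : P3) : P3 := (2*p.1, 2*p.2.1, 2*p.2.2)

lemma dbl_inj : Function.Injective dbl := by
  rintro ⟨a,b,c⟩ ⟨a',b',c'⟩ h
  simp only [dbl, Prod.mk.injEq] at h
  simp only [Prod.mk.injEq]
  omega

lemma SE_img (n : ℕ) : SE n = dbl '' S1 n := by
  ext ⟨x,y,z⟩
  constructor
  · rintro ⟨hQ, hx, hy, hz⟩
    obtain ⟨a, rfl⟩ := hx
    obtain ⟨b, rfl⟩ := hy
    obtain ⟨c, rfl⟩ := hz
    refine ⟨(a,b,c), ?_, rfl⟩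
    simp only [S1, Q, Set.mem_setOf_eq] at hQ ⊢
    linarith
  · rintro ⟨⟨a,b,c⟩, hm, heq⟩
    simp only [dbl, Prod.mk.injEq] at heq
    obtain ⟨h1,h2,h3⟩ := heq
    subst h1; subst h2; subst h3
    simp only [S1, Q, Set.mem_setOf_eq] at hm
    refine ⟨?_, ⟨a, rfl⟩, ⟨b, rfl⟩, ⟨c, rfl⟩⟩
    simp only [Q]
    linarith
def fA : P3 → P3
  | (a, b, c) =>
    if (b - c) % 4 = 0 then (-a - 3*((b+3*c)/2), -a + (b+3*c)/2, c - b)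
    else (-a - 3*((b-3*c)/2), a - (b-3*c)/2, -b - c)

def fB : P3 → P3
  | (a, b, c) =>
    if (a - b) % 4 = 0 then (-a - 3*b, (b-a)/2 - 3*c, (b-a)/2 + c)
    else (-a + 3*b, (-a-b)/2 - 3*c, -((-a-b)/2) - c)

lemma fA_pos (a b c : ℤ) (h : (b-c) % 4 = 0) :
    fA (a,b,c) = (-a - 3*((b+3*c)/2), -a + (b+3*c)/2, c - b) := by
  simp only [fA]; rw [if_pos h]

lemma fA_neg (a b c : ℤ) (h : ¬ (b-c) % 4 = 0) :
    fA (a,b,c) = (-a - 3*((b-3*c)/2), a - (b-3*c)/2, -b - c) := by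
  simp only [fA]; rw [if_neg h]

lemma fB_pos (a b c : ℤ) (h : (a-b) % 4 = 0) :
    fB (a,b,c) = (-a - 3*b, (b-a)/2 - 3*c, (b-a)/2 + c) := by
  simp only [fB]; rw [if_pos h]

lemma fB_neg (a b c : ℤ) (h : ¬ (a-b) % 4 = 0) :
    fB (a,b,c) = (-a + 3*b, (-a-b)/2 - 3*c, -((-a-b)/2) - c) := by
  simp only [fB]; rw [if_neg h]

lemma SA_img (n : ℕ) : SA n = fA '' SO n := by
  ext ⟨x,y,z⟩
  constructor
  · rintro ⟨hQ, hx, hy, hz4⟩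
    simp only [Q] at hQ
    have hx : ¬(2:ℤ)∣x := hx
    have hy : ¬(2:ℤ)∣y := hy
    have hz4 : (4:ℤ)∣z := hz4
    obtain ⟨w, hw⟩ : ∃ w, z = 4*w := ⟨z/4, by omega⟩
    subst hw
    by_cases h4 : (x - y) % 4 = 0
    · obtain ⟨k, hk⟩ : ∃ k, y = x + 4*k := ⟨(y-x)/4, by omega⟩
      subst hk
      have hM1 : (x+3*k)^2 + 3*k^2 + 36*w^2 = Mz n := by
        have h44 : 4*((x+3*k)^2 + 3*k^2 + 36*w^2) = 4*Mz n := by linear_combination hQ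
        linarith
      have hk2 : (2:ℤ) ∣ k := L1 x k w (n:ℤ) hx (by simpa [Mz] using hM1)
      obtain ⟨k', rfl⟩ := hk2
      have hM2 : (x+6*k')^2 + 12*k'^2 + 36*w^2 = 8*(n:ℤ)+13 := by
        simp only [Mz] at hM1; linear_combination hM1
      have hpar := L2 x k' w (n:ℤ) hx hM2
      refine ⟨(-x-6*k', k'-3*w, k'+w), ⟨?_, ?_, ?_, ?_⟩, ?_⟩
      · show Q (-x-6*k', k'-3*w, k'+w) = Mz n
        simp only [Q, Mz]; linear_combination hM2
      · show ¬(2:ℤ) ∣ (-x-6*k'); omega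
      · show ¬(2:ℤ) ∣ (k'-3*w); omega
      · show ¬(2:ℤ) ∣ (k'+w); omega
      · have hcond : ((k'-3*w) - (k'+w)) % 4 = 0 := by omega
        rw [fA_pos _ _ _ hcond]
        have hdiv : (k'-3*w + 3*(k'+w))/2 = 2*k' := by omega
        rw [hdiv]
        simp only [Prod.mk.injEq]
        omega
    · have h42 : (x - y) % 4 = 2 := by omega
      obtain ⟨j, hj⟩ : ∃ j, y = -x + 4*j := ⟨(x+y)/4, by omega⟩
      subst hj
      have hM1 : (x-3*j)^2 + 3*j^2 + 36*w^2 = Mz n := by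
        have h44 : 4*((x-3*j)^2 + 3*j^2 + 36*w^2) = 4*Mz n := by linear_combination hQ
        linarith
      have hj2 : (2:ℤ) ∣ j := by
        have := L1 x (-j) w (n:ℤ) hx (by simp only [Mz] at hM1; linear_combination hM1)
        omega
      obtain ⟨j', rfl⟩ := hj2
      have hM2 : (x-6*j')^2 + 12*j'^2 + 36*w^2 = 8*(n:ℤ)+13 := by
        simp only [Mz] at hM1; linear_combination hM1
      have hpar : ¬ (2:ℤ) ∣ (j'-w) := by
        have := L2 x (-j') w (n:ℤ) hx (by linear_combination hM2)
        omega
      refine ⟨(6*j'-x, -3*w-j', j'-w), ⟨?_, ?_, ?_, ?_⟩, ?_⟩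
      · show Q (6*j'-x, -3*w-j', j'-w) = Mz n
        simp only [Q, Mz]; linear_combination hM2
      · show ¬(2:ℤ) ∣ (6*j'-x); omega
      · show ¬(2:ℤ) ∣ (-3*w-j'); omega
      · show ¬(2:ℤ) ∣ (j'-w); omega
      · have hcond : ¬ ((-3*w-j') - (j'-w)) % 4 = 0 := by omega
        rw [fA_neg _ _ _ hcond]
        have hdiv : (-3*w-j' - 3*(j'-w))/2 = -2*j' := by omega
        rw [hdiv]
        simp only [Prod.mk.injEq]
        omega
  · rintro ⟨⟨a,b,c⟩, ⟨hQ, ha, hb, hc⟩, heq⟩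
    simp only [Q] at hQ
    have ha : ¬(2:ℤ)∣a := ha
    have hb : ¬(2:ℤ)∣b := hb
    have hc : ¬(2:ℤ)∣c := hc
    by_cases h4 : (b - c) % 4 = 0
    · rw [fA_pos _ _ _ h4] at heq
      obtain ⟨s, hsdef⟩ : ∃ s, (b+3*c)/2 = s := ⟨_, rfl⟩
      rw [hsdef] at heq
      have hs : b + 3*c = 2*s := by omega
      have hs2 : (2:ℤ) ∣ s := by omega
      simp only [Prod.mk.injEq] at heq
      obtain ⟨e1, e2, e3⟩ := heq
      subst e1; subst e2; subst e3
      refine ⟨?_, ?_, ?_, ?_⟩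
      · show Q (-a - 3*s, -a + s, c - b) = 4*Mz n
        simp only [Q]
        linear_combination 4*hQ - 3*(2*s+b+3*c)*hs
      · show ¬(2:ℤ) ∣ (-a-3*s); omega
      · show ¬(2:ℤ) ∣ (-a+s); omega
      · show (4:ℤ) ∣ (c-b); omega
    · have h42 : (b - c) % 4 = 2 := by omega
      rw [fA_neg _ _ _ h4] at heq
      obtain ⟨s, hsdef⟩ : ∃ s, (b-3*c)/2 = s := ⟨_, rfl⟩
      rw [hsdef] at heq
      have hs : b - 3*c = 2*s := by omega
      have hs2 : (2:ℤ) ∣ s := by omega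
      simp only [Prod.mk.injEq] at heq
      obtain ⟨e1, e2, e3⟩ := heq
      subst e1; subst e2; subst e3
      refine ⟨?_, ?_, ?_, ?_⟩
      · show Q (-a - 3*s, a - s, -b - c) = 4*Mz n
        simp only [Q]
        linear_combination 4*hQ - 3*(2*s+b-3*c)*hs
      · show ¬(2:ℤ) ∣ (-a-3*s); omega
      · show ¬(2:ℤ) ∣ (a-s); omega
      · show (4:ℤ) ∣ (-b-c); omega

lemma fA_inj (n : ℕ) : Set.InjOn fA (SO n) := by
  rintro ⟨a,b,c⟩ ⟨hQ, ha, hb, hc⟩ ⟨a',b',c'⟩ ⟨hQ', ha', hb', hc'⟩ heq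
  have ha : ¬(2:ℤ)∣a := ha
  have hb : ¬(2:ℤ)∣b := hb
  have hc : ¬(2:ℤ)∣c := hc
  have ha' : ¬(2:ℤ)∣a' := ha'
  have hb' : ¬(2:ℤ)∣b' := hb'
  have hc' : ¬(2:ℤ)∣c' := hc'
  simp only [Prod.mk.injEq]
  by_cases h1 : (b-c) % 4 = 0 <;> by_cases h2 : (b'-c') % 4 = 0
  · rw [fA_pos _ _ _ h1, fA_pos _ _ _ h2] at heq
    obtain ⟨s, hsdef⟩ : ∃ s, (b+3*c)/2 = s := ⟨_, rfl⟩
    obtain ⟨t, htdef⟩ : ∃ t, (b'+3*c')/2 = t := ⟨_, rfl⟩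
    rw [hsdef, htdef] at heq
    simp only [Prod.mk.injEq] at heq
    omega
  · rw [fA_pos _ _ _ h1, fA_neg _ _ _ h2] at heq
    obtain ⟨s, hsdef⟩ : ∃ s, (b+3*c)/2 = s := ⟨_, rfl⟩
    obtain ⟨t, htdef⟩ : ∃ t, (b'-3*c')/2 = t := ⟨_, rfl⟩
    rw [hsdef, htdef] at heq
    simp only [Prod.mk.injEq] at heq
    omega
  · rw [fA_neg _ _ _ h1, fA_pos _ _ _ h2] at heq
    obtain ⟨s, hsdef⟩ : ∃ s, (b-3*c)/2 = s := ⟨_, rfl⟩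
    obtain ⟨t, htdef⟩ : ∃ t, (b'+3*c')/2 = t := ⟨_, rfl⟩
    rw [hsdef, htdef] at heq
    simp only [Prod.mk.injEq] at heq
    omega
  · rw [fA_neg _ _ _ h1, fA_neg _ _ _ h2] at heq
    obtain ⟨s, hsdef⟩ : ∃ s, (b-3*c)/2 = s := ⟨_, rfl⟩
    obtain ⟨t, htdef⟩ : ∃ t, (b'-3*c')/2 = t := ⟨_, rfl⟩
    rw [hsdef, htdef] at heq
    simp only [Prod.mk.injEq] at heq
    omega

lemma SB_img (n : ℕ) : SB n = fB '' SO n := by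
  ext ⟨x,y,z⟩
  constructor
  · rintro ⟨hQ, hx4, hy, hz⟩
    simp only [Q] at hQ
    have hx4 : (4:ℤ)∣x := hx4
    have hy : ¬(2:ℤ)∣y := hy
    have hz : ¬(2:ℤ)∣z := hz
    obtain ⟨u, hu⟩ : ∃ u, x = 4*u := ⟨x/4, by omega⟩
    subst hu
    by_cases h4 : (y - z) % 4 = 0
    · obtain ⟨k, hk⟩ : ∃ k, y = z + 4*k := ⟨(y-z)/4, by omega⟩
      subst hk
      have hM1 : 4*u^2 + 3*(z+k)^2 + 9*k^2 = Mz n := by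
        have h44 : 4*(4*u^2 + 3*(z+k)^2 + 9*k^2) = 4*Mz n := by linear_combination hQ
        linarith
      have hM1' : 4*u^2 + 3*(z+k)^2 + 9*k^2 = 8*(n:ℤ)+13 := by
        simp only [Mz] at hM1; linear_combination hM1
      have hk2 : ¬ (2:ℤ) ∣ k := L4 u (z+k) k (n:ℤ) hM1'
      obtain ⟨e, he⟩ : ∃ e, z + k = 2*e := ⟨(z+k)/2, by omega⟩
      have hM2 : 4*u^2 + 12*e^2 + 9*k^2 = 8*(n:ℤ)+13 := by
        linear_combination hM1' - 3*(z+k+2*e)*he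
      have hpar := L3 u e k (n:ℤ) hk2 hM2
      refine ⟨(-u-3*e, -u+e, -k), ⟨?_, ?_, ?_, ?_⟩, ?_⟩
      · show Q (-u-3*e, -u+e, -k) = Mz n
        simp only [Q, Mz]; linear_combination hM2
      · show ¬(2:ℤ) ∣ (-u-3*e); omega
      · show ¬(2:ℤ) ∣ (-u+e); omega
      · show ¬(2:ℤ) ∣ (-k); omega
      · have hcond : ((-u-3*e) - (-u+e)) % 4 = 0 := by omega
        rw [fB_pos _ _ _ hcond]
        have hdiv : ((-u+e) - (-u-3*e))/2 = 2*e := by omega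
        rw [hdiv]
        simp only [Prod.mk.injEq]
        omega
    · have h42 : (y - z) % 4 = 2 := by omega
      obtain ⟨k, hk⟩ : ∃ k, y = -z + 4*k := ⟨(y+z)/4, by omega⟩
      subst hk
      have hM1 : 4*u^2 + 3*(z-k)^2 + 9*k^2 = Mz n := by
        have h44 : 4*(4*u^2 + 3*(z-k)^2 + 9*k^2) = 4*Mz n := by linear_combination hQ
        linarith
      have hM1' : 4*u^2 + 3*(z-k)^2 + 9*k^2 = 8*(n:ℤ)+13 := by
        simp only [Mz] at hM1; linear_combination hM1
      have hk2 : ¬ (2:ℤ) ∣ k := L4 u (z-k) k (n:ℤ) hM1'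
      obtain ⟨e, he⟩ : ∃ e, z - k = 2*e := ⟨(z-k)/2, by omega⟩
      have hM2 : 4*u^2 + 12*e^2 + 9*k^2 = 8*(n:ℤ)+13 := by
        linear_combination hM1' - 3*(z-k+2*e)*he
      have hpar := L3 u e k (n:ℤ) hk2 hM2
      refine ⟨(3*e-u, e+u, -k), ⟨?_, ?_, ?_, ?_⟩, ?_⟩
      · show Q (3*e-u, e+u, -k) = Mz n
        simp only [Q, Mz]; linear_combination hM2
      · show ¬(2:ℤ) ∣ (3*e-u); omega
      · show ¬(2:ℤ) ∣ (e+u); omega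
      · show ¬(2:ℤ) ∣ (-k); omega
      · have hcond : ¬ ((3*e-u) - (e+u)) % 4 = 0 := by omega
        rw [fB_neg _ _ _ hcond]
        have hdiv : (-(3*e-u) - (e+u))/2 = -2*e := by omega
        rw [hdiv]
        simp only [Prod.mk.injEq]
        omega
  · rintro ⟨⟨a,b,c⟩, ⟨hQ, ha, hb, hc⟩, heq⟩
    simp only [Q] at hQ
    have ha : ¬(2:ℤ)∣a := ha
    have hb : ¬(2:ℤ)∣b := hb
    have hc : ¬(2:ℤ)∣c := hc
    by_cases h4 : (a - b) % 4 = 0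
    · rw [fB_pos _ _ _ h4] at heq
      obtain ⟨s, hsdef⟩ : ∃ s, (b-a)/2 = s := ⟨_, rfl⟩
      rw [hsdef] at heq
      have hs : b - a = 2*s := by omega
      have hs2 : (2:ℤ) ∣ s := by omega
      simp only [Prod.mk.injEq] at heq
      obtain ⟨e1, e2, e3⟩ := heq
      subst e1; subst e2; subst e3
      refine ⟨?_, ?_, ?_, ?_⟩
      · show Q (-a - 3*b, s - 3*c, s + c) = 4*Mz n
        simp only [Q]
        linear_combination 4*hQ - 3*(b-a+2*s)*hs
      · show (4:ℤ) ∣ (-a-3*b); omega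
      · show ¬(2:ℤ) ∣ (s-3*c); omega
      · show ¬(2:ℤ) ∣ (s+c); omega
    · have h42 : (a - b) % 4 = 2 := by omega
      rw [fB_neg _ _ _ h4] at heq
      obtain ⟨s, hsdef⟩ : ∃ s, (-a-b)/2 = s := ⟨_, rfl⟩
      rw [hsdef] at heq
      have hs : -a - b = 2*s := by omega
      have hs2 : (2:ℤ) ∣ s := by omega
      simp only [Prod.mk.injEq] at heq
      obtain ⟨e1, e2, e3⟩ := heq
      subst e1; subst e2; subst e3
      refine ⟨?_, ?_, ?_, ?_⟩
      · show Q (-a + 3*b, s - 3*c, -s - c) = 4*Mz n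
        simp only [Q]
        linear_combination 4*hQ + (3*a+3*b-6*s)*hs
      · show (4:ℤ) ∣ (-a+3*b); omega
      · show ¬(2:ℤ) ∣ (s-3*c); omega
      · show ¬(2:ℤ) ∣ (-s-c); omega

lemma fB_inj (n : ℕ) : Set.InjOn fB (SO n) := by
  rintro ⟨a,b,c⟩ ⟨hQ, ha, hb, hc⟩ ⟨a',b',c'⟩ ⟨hQ', ha', hb', hc'⟩ heq
  have ha : ¬(2:ℤ)∣a := ha
  have hb : ¬(2:ℤ)∣b := hb
  have hc : ¬(2:ℤ)∣c := hc
  have ha' : ¬(2:ℤ)∣a' := ha'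
  have hb' : ¬(2:ℤ)∣b' := hb'
  have hc' : ¬(2:ℤ)∣c' := hc'
  simp only [Prod.mk.injEq]
  by_cases h1 : (a-b) % 4 = 0 <;> by_cases h2 : (a'-b') % 4 = 0
  · rw [fB_pos _ _ _ h1, fB_pos _ _ _ h2] at heq
    obtain ⟨s, hsdef⟩ : ∃ s, (b-a)/2 = s := ⟨_, rfl⟩
    obtain ⟨t, htdef⟩ : ∃ t, (b'-a')/2 = t := ⟨_, rfl⟩
    rw [hsdef, htdef] at heq
    simp only [Prod.mk.injEq] at heq
    omega
  · rw [fB_pos _ _ _ h1, fB_neg _ _ _ h2] at heq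
    obtain ⟨s, hsdef⟩ : ∃ s, (b-a)/2 = s := ⟨_, rfl⟩
    obtain ⟨t, htdef⟩ : ∃ t, (-a'-b')/2 = t := ⟨_, rfl⟩
    rw [hsdef, htdef] at heq
    simp only [Prod.mk.injEq] at heq
    omega
  · rw [fB_neg _ _ _ h1, fB_pos _ _ _ h2] at heq
    obtain ⟨s, hsdef⟩ : ∃ s, (-a-b)/2 = s := ⟨_, rfl⟩
    obtain ⟨t, htdef⟩ : ∃ t, (b'-a')/2 = t := ⟨_, rfl⟩
    rw [hsdef, htdef] at heq
    simp only [Prod.mk.injEq] at heq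
    omega
  · rw [fB_neg _ _ _ h1, fB_neg _ _ _ h2] at heq
    obtain ⟨s, hsdef⟩ : ∃ s, (-a-b)/2 = s := ⟨_, rfl⟩
    obtain ⟨t, htdef⟩ : ∃ t, (-a'-b')/2 = t := ⟨_, rfl⟩
    rw [hsdef, htdef] at heq
    simp only [Prod.mk.injEq] at heq
    omega

lemma partition (n : ℕ) : S4 n = SE n ∪ (SA n ∪ SB n) := by
  ext ⟨x,y,z⟩
  constructor
  · intro hQ
    have hQ' : x^2+3*y^2+9*z^2 = 4*Mz n := hQ
    have hcl := classify4 x y z (4*Mz n) (by simp only [Mz]; omega) hQ'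
    rcases hcl with ⟨h1,h2,h3⟩|⟨h1,h2,h3⟩|⟨h1,h2,h3⟩
    · exact Or.inl ⟨hQ, h1, h2, h3⟩
    · exact Or.inr (Or.inl ⟨hQ, h1, h2, h3⟩)
    · exact Or.inr (Or.inr ⟨hQ, h1, h2, h3⟩)
  · rintro (⟨h,-,-,-⟩|⟨h,-,-,-⟩|⟨h,-,-,-⟩) <;> exact h

lemma disj1 (n : ℕ) : Disjoint (SE n) (SA n ∪ SB n) := by
  rw [Set.disjoint_left]
  rintro ⟨x,y,z⟩ ⟨-,h1,h2,h3⟩ (⟨-,g1,g2,g3⟩|⟨-,g1,g2,g3⟩)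
  · exact g1 h1
  · exact g2 h2

lemma disj2 (n : ℕ) : Disjoint (SA n) (SB n) := by
  rw [Set.disjoint_left]
  rintro ⟨x,y,z⟩ ⟨-,h1,h2,h3⟩ ⟨-,g1,g2,g3⟩
  exact h1 (dvd_trans ⟨2, rfl⟩ g1)

lemma S4_card (n : ℕ) :
    (S4 n).ncard = (SE n).ncard + (SA n).ncard + (SB n).ncard := by
  rw [partition n, Set.ncard_union_eq (disj1 n) (finSE n) ((finSA n).union (finSB n)),
      Set.ncard_union_eq (disj2 n) (finSA n) (finSB n)]
  ring

lemma N_eq (K : ℕ) : N 1 3 9 K = ({p : P3 | Q p = (K:ℤ)}).ncard := by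
  rw [← Nat.card_coe_set_eq]
  apply Nat.card_congr
  apply Equiv.subtypeEquivRight
  intro p
  obtain ⟨x,y,z⟩ := p
  simp only [Q, Set.mem_setOf_eq]
  push_cast
  constructor <;> intro h <;> linarith

def sg (s : Bool) : ℤ := if s then 1 else -1

lemma sg_sq (s : Bool) (t : ℤ) : (sg s * t)^2 = t^2 := by
  cases s <;> simp [sg] <;> ring

lemma sg_odd (s : Bool) (u : ℕ) : ¬ (2:ℤ) ∣ (sg s * (2*(u:ℤ)+1)) := by
  cases s
  all_goals simp [sg]
  all_goals omega

lemma sg_inj (s s' : Bool) (u u' : ℕ)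
    (h : sg s * (2*(u:ℤ)+1) = sg s' * (2*(u':ℤ)+1)) : s = s' ∧ u = u' := by
  cases s <;> cases s' <;> simp [sg] at h ⊢ <;> omega

lemma exists_sg (x : ℤ) (hx : ¬ (2:ℤ)∣x) :
    ∃ (s : Bool) (u : ℕ), sg s * (2*(u:ℤ)+1) = x := by
  rcases le_or_gt 0 x with h|h
  · refine ⟨true, ((x-1)/2).toNat, ?_⟩
    simp only [sg, if_pos, one_mul, if_true]
    omega
  · refine ⟨false, ((-x-1)/2).toNat, ?_⟩
    simp only [sg, if_false, Bool.false_eq_true, neg_mul, one_mul]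
    omega

lemma tri_sq (u : ℕ) : (2*(u:ℤ)+1)^2 = 8*((u*(u+1)/2 : ℕ):ℤ) + 1 := by
  have h : (u*(u+1)/2) * 2 = u*(u+1) := Nat.div_mul_cancel (Nat.even_mul_succ_self u).two_dvd
  have h' : ((u*(u+1)/2 : ℕ):ℤ) * 2 = (u:ℤ)*((u:ℤ)+1) := by exact_mod_cast h
  linear_combination (-4)*h'

def Tc (n : ℕ) (p : ℕ×ℕ×ℕ) : Prop :=
  p.1*(p.1+1)/2 + 3*(p.2.1*(p.2.1+1)/2) + 9*(p.2.2*(p.2.2+1)/2) = n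

lemma T_eq (n : ℕ) : T 1 3 9 n = Nat.card {p : ℕ×ℕ×ℕ // Tc n p} := by
  apply Nat.card_congr
  apply Equiv.subtypeEquivRight
  intro p
  simp only [Tc]
  omega

lemma G_mem (n : ℕ) (s1 s2 s3 : Bool) (u v w : ℕ) (h : Tc n (u,v,w)) :
    ((sg s1 * (2*(u:ℤ)+1), sg s2 * (2*(v:ℤ)+1), sg s3 * (2*(w:ℤ)+1)) : P3) ∈ SO n := by
  refine ⟨?_, sg_odd _ _, sg_odd _ _, sg_odd _ _⟩
  show Q _ = Mz n
  simp only [Q]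
  rw [sg_sq, sg_sq, sg_sq, tri_sq, tri_sq, tri_sq]
  simp only [Tc] at h
  have h' : ((u*(u+1)/2 : ℕ):ℤ) + 3*((v*(v+1)/2 : ℕ):ℤ) + 9*((w*(w+1)/2 : ℕ):ℤ) = (n:ℤ) := by
    exact_mod_cast h
  simp only [Mz]
  linarith

def G (n : ℕ) (q : Bool × Bool × Bool × {p : ℕ×ℕ×ℕ // Tc n p}) : ↥(SO n) :=
  ⟨(sg q.1 * (2*(q.2.2.2.1.1:ℤ)+1), sg q.2.1 * (2*(q.2.2.2.1.2.1:ℤ)+1),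
    sg q.2.2.1 * (2*(q.2.2.2.1.2.2:ℤ)+1)),
   by obtain ⟨s1,s2,s3,⟨⟨u,v,w⟩,h⟩⟩ := q; exact G_mem n s1 s2 s3 u v w h⟩

lemma G_bij (n : ℕ) : Function.Bijective (G n) := by
  constructor
  · rintro ⟨s1,s2,s3,⟨⟨u,v,w⟩,h⟩⟩ ⟨t1,t2,t3,⟨⟨u',v',w'⟩,h'⟩⟩ heq
    simp only [G, Subtype.mk.injEq, Prod.mk.injEq] at heq
    obtain ⟨e1,e2,e3⟩ := heq
    obtain ⟨hs1, hu⟩ := sg_inj _ _ _ _ e1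
    obtain ⟨hs2, hv⟩ := sg_inj _ _ _ _ e2
    obtain ⟨hs3, hw⟩ := sg_inj _ _ _ _ e3
    subst hs1; subst hs2; subst hs3; subst hu; subst hv; subst hw
    rfl
  · rintro ⟨⟨x,y,z⟩, hQ, hx, hy, hz⟩
    have hx : ¬(2:ℤ)∣x := hx
    have hy : ¬(2:ℤ)∣y := hy
    have hz : ¬(2:ℤ)∣z := hz
    have hQ' : x^2+3*y^2+9*z^2 = Mz n := hQ
    obtain ⟨s1,u,hu⟩ := exists_sg x hx
    obtain ⟨s2,v,hv⟩ := exists_sg y hy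
    obtain ⟨s3,w,hw⟩ := exists_sg z hz
    have hTc : Tc n (u,v,w) := by
      have hx2 : x^2 = 8*((u*(u+1)/2 : ℕ):ℤ)+1 := by rw [← hu, sg_sq, tri_sq]
      have hy2 : y^2 = 8*((v*(v+1)/2 : ℕ):ℤ)+1 := by rw [← hv, sg_sq, tri_sq]
      have hz2 : z^2 = 8*((w*(w+1)/2 : ℕ):ℤ)+1 := by rw [← hw, sg_sq, tri_sq]
      simp only [Mz] at hQ'
      have hcast : ((u*(u+1)/2 : ℕ):ℤ) + 3*((v*(v+1)/2 : ℕ):ℤ) + 9*((w*(w+1)/2 : ℕ):ℤ) = (n:ℤ) := by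
        linarith
      simp only [Tc]
      exact_mod_cast hcast
    refine ⟨⟨s1,s2,s3,⟨(u,v,w), hTc⟩⟩, ?_⟩
    apply Subtype.ext
    show (_, _, _) = ((x,y,z) : P3)
    simp only [Prod.mk.injEq]
    exact ⟨hu, hv, hw⟩

lemma SO_card (n : ℕ) : (SO n).ncard = 8 * T 1 3 9 n := by
  rw [← Nat.card_coe_set_eq, T_eq, ← Nat.card_eq_of_bijective (G n) (G_bij n)]
  rw [Nat.card_prod, Nat.card_prod, Nat.card_prod]
  simp [Nat.card_eq_fintype_card]
  ring

end Stmt5Aux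


open Stmt5Aux in
theorem stmt_5 (n : ℕ) (hn : 0 < n) :
    (16 * T 1 3 9 n : ℤ) = (N 1 3 9 (4 * (8 * n + 13)) : ℤ) - (N 1 3 9 (8 * n + 13) : ℤ) := by
  have hN4 : N 1 3 9 (4*(8*n+13)) = (S4 n).ncard := by
    rw [N_eq, show (((4*(8*n+13)):ℕ):ℤ) = 4*Mz n from by simp only [Mz]; push_cast; ring]
    rfl
  have hN1 : N 1 3 9 (8*n+13) = (S1 n).ncard := by
    rw [N_eq, show (((8*n+13):ℕ):ℤ) = Mz n from by simp only [Mz]; push_cast; ring]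
    rfl
  have h2 : (SE n).ncard = (S1 n).ncard := by
    rw [SE_img, Set.ncard_image_of_injective _ dbl_inj]
  have h3 : (SA n).ncard = (SO n).ncard := by
    rw [SA_img, Set.ncard_image_of_injOn (fA_inj n)]
  have h4 : (SB n).ncard = (SO n).ncard := by
    rw [SB_img, Set.ncard_image_of_injOn (fB_inj n)]
  have h5 := SO_card n
  have h6 := S4_card n
  have hkey : N 1 3 9 (4*(8*n+13)) = N 1 3 9 (8*n+13) + 16 * T 1 3 9 n := by omega
  rw [hkey]
  push_cast
  ring
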